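/- g_{10000}(10000) ≥ 9.7657. -/

import Mathlib

/-- The auxiliary lower-bound function `g_d`: `g_d 0 = 1` and
`g_d l = g_d (l-1) · inf_{t ∈ (0,1)} ((1 + t·g_d(l-1))/(1-t))^{1/(t·d)}`. -/
noncomputable def gfun (d : ℕ) : ℕ → ℝ
  | 0 => 1
  | l + 1 =>
      gfun d l *
        sInf ((fun t : ℝ => ((1 + t * gfun d l) / (1 - t)) ^ (1 / (t * (d : ℝ)))) ''
          Set.Ioo 0 1)

open Real Set

lemma core_ineq (g c t : ℝ) (hg : 1 ≤ g) (ht0 : 0 < t) (ht1 : t < 1)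
    (hc : 0 < c) (hcle : c ≤ 1 + Real.log (1 + g)) :
    Real.exp (c * t) ≤ (1 + t * g) / (1 - t) := by
  have hgpos : (0:ℝ) < 1 + g := by linarith
  have hlog0 : 0 ≤ Real.log (1 + g) := Real.log_nonneg (by linarith)
  have h1 : Real.exp (c * t) ≤ Real.exp ((1 + Real.log (1 + g)) * t) := by
    apply Real.exp_le_exp.2
    nlinarith
  have hB : (1 + g) ^ t ≤ 1 + t * g := by
    have := rpow_one_add_le_one_add_mul_self (s := g) (by linarith) ht0.le ht1.le
    linarith
  have hrw : Real.exp ((1 + Real.log (1 + g)) * t) = Real.exp t * (1 + g) ^ t := by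
    rw [Real.rpow_def_of_pos hgpos, ← Real.exp_add]
    ring_nf
  have het : Real.exp t * (1 - t) ≤ 1 := by
    have h := Real.add_one_le_exp (-t)
    have h2 : Real.exp t * (1 - t) ≤ Real.exp t * Real.exp (-t) := by
      have : (1:ℝ) - t ≤ Real.exp (-t) := by linarith
      exact mul_le_mul_of_nonneg_left this (Real.exp_pos t).le
    rwa [← Real.exp_add, add_neg_cancel, Real.exp_zero] at h2
  have h1t : (0:ℝ) < 1 - t := by linarith
  rw [le_div_iff₀ h1t]
  calc Real.exp (c * t) * (1 - t) ≤ Real.exp t * (1 + g) ^ t * (1 - t) := by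
        rw [← hrw]
        exact mul_le_mul_of_nonneg_right h1 h1t.le
    _ = (Real.exp t * (1 - t)) * (1 + g) ^ t := by ring
    _ ≤ 1 * (1 + t * g) := by
        apply mul_le_mul
        · exact het
        · exact hB
        · positivity
        · norm_num
    _ = 1 + t * g := one_mul _

lemma inf_ge (d : ℕ) (hd : 0 < d) (g c : ℝ) (hg : 1 ≤ g) (hc : 0 < c)
    (hcle : c ≤ 1 + Real.log (1 + g)) :
    Real.exp (c / (d : ℝ)) ≤
      sInf ((fun t : ℝ => ((1 + t * g) / (1 - t)) ^ (1 / (t * (d : ℝ)))) '' Set.Ioo 0 1) := by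
  apply le_csInf
  · exact ⟨_, ⟨1/2, by norm_num, rfl⟩⟩
  · rintro b ⟨t, ⟨ht0, ht1⟩, rfl⟩
    have hdpos : (0:ℝ) < (d : ℝ) := by exact_mod_cast hd
    have hexp : (0:ℝ) < 1 / (t * (d : ℝ)) := by positivity
    have key : Real.exp (c * t) ^ (1 / (t * (d : ℝ)))
        ≤ ((1 + t * g) / (1 - t)) ^ (1 / (t * (d : ℝ))) :=
      Real.rpow_le_rpow (Real.exp_pos _).le (core_ineq g c t hg ht0 ht1 hc hcle) hexp.le
    have heq : Real.exp (c * t) ^ (1 / (t * (d : ℝ))) = Real.exp (c / (d : ℝ)) := by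
      rw [← Real.exp_mul]
      congr 1
      field_simp
    rw [← heq]
    exact key

lemma gfun_step (l : ℕ) (c : ℝ) (hg : 1 ≤ gfun 10000 l) (hc : 0 < c)
    (hcle : c ≤ 1 + Real.log (1 + gfun 10000 l)) :
    gfun 10000 l * Real.exp (c / 10000) ≤ gfun 10000 (l + 1) := by
  have h := inf_ge 10000 (by norm_num) (gfun 10000 l) c hg hc hcle
  have hcast : ((10000 : ℕ) : ℝ) = (10000 : ℝ) := by norm_num
  rw [hcast] at h
  show gfun 10000 l * Real.exp (c / 10000) ≤ gfun 10000 l * sInf _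
  exact mul_le_mul_of_nonneg_left (le_trans (le_of_eq (by norm_num)) h) (by linarith)

lemma gfun_one_le : ∀ l, 1 ≤ gfun 10000 l := by
  intro l
  induction l with
  | zero => simp [gfun]
  | succ n ih =>
    have h := gfun_step n 1 ih one_pos
      (by linarith [Real.log_nonneg (by linarith : (1:ℝ) ≤ 1 + gfun 10000 n)])
    have : (1:ℝ) ≤ gfun 10000 n * Real.exp (1 / 10000) := by
      have h1 : (1:ℝ) ≤ Real.exp (1/10000) := by
        rw [Real.one_le_exp_iff]; norm_num
      nlinarith
    linarith

lemma gfun_seg (K r : ℝ) (hK : 1 ≤ K) (hr : 0 < r) (hlog : r ≤ 1 + Real.log (1 + K))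
    (l₀ : ℕ) (h0 : K ≤ gfun 10000 l₀) :
    ∀ m : ℕ, K * Real.exp (r * m / 10000) ≤ gfun 10000 (l₀ + m) := by
  intro m
  induction m with
  | zero => simpa using h0
  | succ n ih =>
    have hgK : K ≤ gfun 10000 (l₀ + n) := by
      have h1 : K * 1 ≤ K * Real.exp (r * n / 10000) := by
        apply mul_le_mul_of_nonneg_left _ (by linarith)
        rw [Real.one_le_exp_iff]
        positivity
      linarith [h1, ih]
    have hcle : r ≤ 1 + Real.log (1 + gfun 10000 (l₀ + n)) := by
      have : Real.log (1 + K) ≤ Real.log (1 + gfun 10000 (l₀ + n)) :=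
        Real.log_le_log (by linarith) (by linarith)
      linarith
    have hstep := gfun_step (l₀ + n) r (le_trans hK hgK) hr hcle
    have : K * Real.exp (r * (n + 1) / 10000)
        = (K * Real.exp (r * n / 10000)) * Real.exp (r / 10000) := by
      rw [mul_assoc, ← Real.exp_add]
      congr 2
      ring
    rw [show l₀ + (n + 1) = (l₀ + n) + 1 from rfl]
    calc K * Real.exp (r * ((n:ℕ) + 1 : ℕ) / 10000)
        = (K * Real.exp (r * n / 10000)) * Real.exp (r / 10000) := by
          rw [mul_assoc, ← Real.exp_add]; congr 2; push_cast; ring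
      _ ≤ gfun 10000 (l₀ + n) * Real.exp (r / 10000) :=
          mul_le_mul_of_nonneg_right ih (Real.exp_pos _).le
      _ ≤ gfun 10000 (l₀ + n + 1) := gfun_step (l₀ + n) r (le_trans hK hgK) hr hcle

lemma advance (l₀ : ℕ) (K r K' : ℝ) (hK : 1 ≤ K) (hr1 : 1 ≤ r) (hr5 : r ≤ 5)
    (hnum1 : 1 ≤ (1 + K) * (1 - (r - 1) / 128) ^ (128 : ℕ))
    (hnum2 : K' ≤ K * (1 + r / 2560) ^ (128 : ℕ))
    (h0 : K ≤ gfun 10000 l₀) : K' ≤ gfun 10000 (l₀ + 500) := by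
  -- step 1 : exp (r-1) ≤ 1 + K, hence r ≤ 1 + log (1+K)
  have hx : (0:ℝ) ≤ r - 1 := by linarith
  have hbase : (0:ℝ) < 1 - (r - 1) / 128 := by linarith
  have hexp1 : Real.exp ((r - 1) / 128) * (1 - (r - 1) / 128) ≤ 1 := by
    have h := Real.add_one_le_exp (-((r - 1) / 128))
    have h2 : Real.exp ((r-1)/128) * (1 - (r-1)/128)
        ≤ Real.exp ((r-1)/128) * Real.exp (-((r-1)/128)) := by
      apply mul_le_mul_of_nonneg_left (by linarith) (Real.exp_pos _).le
    rwa [← Real.exp_add, add_neg_cancel, Real.exp_zero] at h2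
  have hexp128 : Real.exp (r - 1) * (1 - (r - 1) / 128) ^ (128 : ℕ) ≤ 1 := by
    have hpow : (Real.exp ((r-1)/128) * (1 - (r-1)/128)) ^ (128:ℕ) ≤ 1 ^ (128:ℕ) :=
      pow_le_pow_left₀ (by positivity) hexp1 _
    rw [mul_pow, one_pow, ← Real.exp_nat_mul] at hpow
    have he : ((128:ℕ):ℝ) * ((r - 1) / 128) = r - 1 := by push_cast; ring
    rwa [he] at hpow
  have hlogK : r ≤ 1 + Real.log (1 + K) := by
    have hKpos : (0:ℝ) < 1 + K := by linarith
    have h3 : Real.exp (r - 1) ≤ 1 + K := by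
      have hp : (0:ℝ) < (1 - (r - 1) / 128) ^ (128 : ℕ) := by positivity
      have hch : Real.exp (r - 1) * (1 - (r - 1) / 128) ^ (128 : ℕ)
          ≤ (1 + K) * (1 - (r - 1) / 128) ^ (128 : ℕ) := le_trans hexp128 hnum1
      exact le_of_mul_le_mul_right hch hp
    have := (Real.le_log_iff_exp_le hKpos).2 h3
    linarith
  -- step 2 : K' ≤ K * exp (r/20)
  have hlb : (1 + r / 2560) ^ (128 : ℕ) ≤ Real.exp (r / 20) := by
    have h1 : (1 : ℝ) + r / 2560 ≤ Real.exp (r / 2560) := by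
      have := Real.add_one_le_exp (r / 2560); linarith
    have h2 : ((1:ℝ) + r / 2560) ^ (128:ℕ) ≤ (Real.exp (r / 2560)) ^ (128:ℕ) :=
      pow_le_pow_left₀ (by positivity) h1 _
    rw [← Real.exp_nat_mul] at h2
    have he : ((128:ℕ):ℝ) * (r / 2560) = r / 20 := by push_cast; ring
    rwa [he] at h2
  have hK' : K' ≤ K * Real.exp (r / 20) := by
    have := mul_le_mul_of_nonneg_left hlb (by linarith : (0:ℝ) ≤ K)
    linarith
  have hseg := gfun_seg K r hK (by linarith) hlogK l₀ h0 500
  have : K * Real.exp (r * (500:ℕ) / 10000) = K * Real.exp (r / 20) := by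
    congr 2
    push_cast
    ring
  rw [this] at hseg
  linarith

/-- `g_{10000}(10000) ≥ 9.7657`. -/
theorem gfun_10000_ge : gfun 10000 10000 ≥ 9.7657 := by
  have h0 : (1 : ℝ) ≤ gfun 10000 0 := by simp [gfun]
  have h1 : (1088211/1000000 : ℝ) ≤ gfun 10000 500 := by
    have := advance 0 (1 : ℝ) (1691273/1000000 : ℝ) (1088211/1000000 : ℝ) (by norm_num) (by norm_num) (by norm_num) (by norm_num) (by norm_num) h0
    simpa using this
  have h2 : (593373/500000 : ℝ) ≤ gfun 10000 1000 := by
    have := advance 500 (1088211/1000000 : ℝ) (867097/500000 : ℝ) (593373/500000 : ℝ) (by norm_num) (by norm_num) (by norm_num) (by norm_num) (by norm_num) h1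
    simpa using this
  have h3 : (129717/100000 : ℝ) ≤ gfun 10000 1500 := by
    have := advance 1000 (593373/500000 : ℝ) (445007/250000 : ℝ) (129717/100000 : ℝ) (by norm_num) (by norm_num) (by norm_num) (by norm_num) (by norm_num) h2
    simpa using this
  have h4 : (1421341/1000000 : ℝ) ≤ gfun 10000 2000 := by
    have := advance 1500 (129717/100000 : ℝ) (1828981/1000000 : ℝ) (1421341/1000000 : ℝ) (by norm_num) (by norm_num) (by norm_num) (by norm_num) (by norm_num) h3
    simpa using this
  have h5 : (1561473/1000000 : ℝ) ≤ gfun 10000 2500 := by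
    have := advance 2000 (1421341/1000000 : ℝ) (1881273/1000000 : ℝ) (1561473/1000000 : ℝ) (by norm_num) (by norm_num) (by norm_num) (by norm_num) (by norm_num) h4
    simpa using this
  have h6 : (344043/200000 : ℝ) ≤ gfun 10000 3000 := by
    have := advance 2500 (1561473/1000000 : ℝ) (387427/200000 : ℝ) (344043/200000 : ℝ) (by norm_num) (by norm_num) (by norm_num) (by norm_num) (by norm_num) h5
    simpa using this
  have h7 : (950377/500000 : ℝ) ≤ gfun 10000 3500 := by
    have := advance 3000 (344043/200000 : ℝ) (1996809/1000000 : ℝ) (950377/500000 : ℝ) (by norm_num) (by norm_num) (by norm_num) (by norm_num) (by norm_num) h6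
    simpa using this
  have h8 : (105347/50000 : ℝ) ≤ gfun 10000 4000 := by
    have := advance 3500 (950377/500000 : ℝ) (257569/125000 : ℝ) (105347/50000 : ℝ) (by norm_num) (by norm_num) (by norm_num) (by norm_num) (by norm_num) h7
    simpa using this
  have h9 : (2343449/1000000 : ℝ) ≤ gfun 10000 4500 := by
    have := advance 4000 (105347/50000 : ℝ) (2128633/1000000 : ℝ) (2343449/1000000 : ℝ) (by norm_num) (by norm_num) (by norm_num) (by norm_num) (by norm_num) h8
    simpa using this
  have h10 : (261599/100000 : ℝ) ≤ gfun 10000 5000 := by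
    have := advance 4500 (2343449/1000000 : ℝ) (2201329/1000000 : ℝ) (261599/100000 : ℝ) (by norm_num) (by norm_num) (by norm_num) (by norm_num) (by norm_num) h9
    simpa using this
  have h11 : (2931571/1000000 : ℝ) ≤ gfun 10000 5500 := by
    have := advance 5000 (261599/100000 : ℝ) (2278933/1000000 : ℝ) (2931571/1000000 : ℝ) (by norm_num) (by norm_num) (by norm_num) (by norm_num) (by norm_num) h10
    simpa using this
  have h12 : (82471/25000 : ℝ) ≤ gfun 10000 6000 := by
    have := advance 5500 (2931571/1000000 : ℝ) (2361743/1000000 : ℝ) (82471/25000 : ℝ) (by norm_num) (by norm_num) (by norm_num) (by norm_num) (by norm_num) h11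
    simpa using this
  have h13 : (466067/125000 : ℝ) ≤ gfun 10000 6500 := by
    have := advance 6000 (82471/25000 : ℝ) (612517/250000 : ℝ) (466067/125000 : ℝ) (by norm_num) (by norm_num) (by norm_num) (by norm_num) (by norm_num) h12
    simpa using this
  have h14 : (423407/100000 : ℝ) ≤ gfun 10000 7000 := by
    have := advance 6500 (466067/125000 : ℝ) (101769/40000 : ℝ) (423407/100000 : ℝ) (by norm_num) (by norm_num) (by norm_num) (by norm_num) (by norm_num) h13
    simpa using this
  have h15 : (4832297/1000000 : ℝ) ≤ gfun 10000 7500 := by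
    have := advance 7000 (423407/100000 : ℝ) (2644533/1000000 : ℝ) (4832297/1000000 : ℝ) (by norm_num) (by norm_num) (by norm_num) (by norm_num) (by norm_num) h14
    simpa using this
  have h16 : (5544541/1000000 : ℝ) ≤ gfun 10000 8000 := by
    have := advance 7500 (4832297/1000000 : ℝ) (2751319/1000000 : ℝ) (5544541/1000000 : ℝ) (by norm_num) (by norm_num) (by norm_num) (by norm_num) (by norm_num) h15
    simpa using this
  have h17 : (6397961/1000000 : ℝ) ≤ gfun 10000 8500 := by
    have := advance 8000 (5544541/1000000 : ℝ) (179057/62500 : ℝ) (6397961/1000000 : ℝ) (by norm_num) (by norm_num) (by norm_num) (by norm_num) (by norm_num) h16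
    simpa using this
  have h18 : (7427389/1000000 : ℝ) ≤ gfun 10000 9000 := by
    have := advance 8500 (6397961/1000000 : ℝ) (2985641/1000000 : ℝ) (7427389/1000000 : ℝ) (by norm_num) (by norm_num) (by norm_num) (by norm_num) (by norm_num) h17
    simpa using this
  have h19 : (8677831/1000000 : ℝ) ≤ gfun 10000 9500 := by
    have := advance 9000 (7427389/1000000 : ℝ) (1556919/500000 : ℝ) (8677831/1000000 : ℝ) (by norm_num) (by norm_num) (by norm_num) (by norm_num) (by norm_num) h18
    simpa using this
  have h20 : (255197/25000 : ℝ) ≤ gfun 10000 10000 := by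
    have := advance 9500 (8677831/1000000 : ℝ) (324983/100000 : ℝ) (255197/25000 : ℝ) (by norm_num) (by norm_num) (by norm_num) (by norm_num) (by norm_num) h19
    simpa using this
  calc (9.7657:ℝ) ≤ (255197/25000 : ℝ) := by norm_num
    _ ≤ gfun 10000 10000 := h20
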